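/- Let V be a finite-dimensional real vector space, α a nonzero linear form on V, and β an alternating 2-form on V. Then the codimension in V of the subspace {v ∈ V | α(v) = 0 and ι(v)β = 0 on ker α} is odd. Consequently the (pointwise) class of a rank-1 Pfaffian system is always odd. -/

import Mathlib

/-!
An alternating form has even rank: restricted to a complement of its radical it is
nondegenerate, and a nondegenerate alternating form has a skew-symmetric Gram matrix `M` with
`det M = det Mᵀ = (-1)ⁿ det M ≠ 0`, forcing `n` even. The subspace `Δ` is the radical of `β`
restricted to the hyperplane `ker α`, so its codimension in `V` is one plus an even number.
-/

open Module

/-- The radical of the restriction of a bilinear form `β` to a subspace `H`. -/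
def bilinRadical {V : Type*} [AddCommGroup V] [Module ℝ V]
    (β : V →ₗ[ℝ] V →ₗ[ℝ] ℝ) (H : Submodule ℝ V) : Submodule ℝ V where
  carrier := {v | v ∈ H ∧ ∀ w ∈ H, β v w = 0}
  add_mem' := fun ha hb => ⟨H.add_mem ha.1 hb.1, fun w hw => by
    simp [map_add, ha.2 w hw, hb.2 w hw]⟩
  zero_mem' := ⟨H.zero_mem, fun w _ => by simp⟩
  smul_mem' := fun c a ha => ⟨H.smul_mem c ha.1, fun w hw => by
    simp [ha.2 w hw]⟩

namespace LinearMap.IsAlt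

theorem even_finrank_of_separatingLeft {K W : Type*} [Field K] (hK : ringChar K ≠ 2)
    [AddCommGroup W] [Module K W] [FiniteDimensional K W] {B : W →ₗ[K] W →ₗ[K] K}
    (hB : B.IsAlt) (hsep : B.SeparatingLeft) : Even (finrank K W) := by
  let b := Module.finBasis K W
  set M := LinearMap.toMatrix₂ b b B
  have hskew : M.transpose = -M := by
    ext i j
    simp only [M, Matrix.transpose_apply, Matrix.neg_apply, LinearMap.toMatrix₂_apply]
    exact (hB.neg _ _).symm
  have hdet : M.det ≠ 0 := (LinearMap.separatingLeft_iff_det_ne_zero b).mp hsep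
  have hpow : (-1 : K) ^ finrank K W = 1 := by
    have := congrArg Matrix.det hskew
    rw [Matrix.det_transpose, Matrix.det_neg, Fintype.card_fin] at this
    exact (mul_eq_right₀ hdet).mp this.symm
  exact (neg_one_pow_eq_one_iff_even (Ring.neg_one_ne_one_of_char_ne_two hK)).mp hpow

variable {V : Type*} [AddCommGroup V] [Module ℝ V] {β : V →ₗ[ℝ] V →ₗ[ℝ] ℝ}

theorem separatingLeft_compl₁₂_of_isCompl_bilinRadical (hβ : β.IsAlt) {C : Submodule ℝ V}
    (hC : IsCompl (bilinRadical β ⊤) C) : (β.compl₁₂ C.subtype C.subtype).SeparatingLeft := by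
  rintro ⟨c, hc⟩ horth
  suffices c ∈ bilinRadical β ⊤ from
    Subtype.ext ((Submodule.disjoint_def.mp hC.disjoint) c this hc)
  refine ⟨trivial, fun w _ => ?_⟩
  obtain ⟨r, hr, c', hc', rfl⟩ :=
    Submodule.mem_sup.mp (hC.codisjoint.eq_top ▸ Submodule.mem_top (x := w))
  have hcr : β c r = 0 := by rw [← hβ.neg, hr.2 c trivial, neg_zero]
  simpa [hcr] using horth ⟨c', hc'⟩

theorem even_finrank_sub_finrank_bilinRadical_top [FiniteDimensional ℝ V] (hβ : β.IsAlt) :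
    Even (finrank ℝ V - finrank ℝ (bilinRadical β ⊤)) := by
  obtain ⟨C, hC⟩ := Submodule.exists_isCompl (bilinRadical β ⊤)
  have hCeven := even_finrank_of_separatingLeft (by simp [ringChar.eq_zero])
    (B := β.compl₁₂ C.subtype C.subtype) (fun x => hβ x)
    (separatingLeft_compl₁₂_of_isCompl_bilinRadical hβ hC)
  rwa [← Submodule.finrank_add_eq_of_isCompl hC, Nat.add_sub_cancel_left]

end LinearMap.IsAlt

section Restriction

variable {V : Type*} [AddCommGroup V] [Module ℝ V] (β : V →ₗ[ℝ] V →ₗ[ℝ] ℝ) (H : Submodule ℝ V)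

theorem map_subtype_bilinRadical_compl₁₂_top :
    (bilinRadical (β.compl₁₂ H.subtype H.subtype) ⊤).map H.subtype = bilinRadical β H := by
  ext x
  constructor
  · rintro ⟨⟨y, hy⟩, ⟨-, horth⟩, rfl⟩
    exact ⟨hy, fun z hz => horth ⟨z, hz⟩ trivial⟩
  · rintro ⟨hx, horth⟩
    exact ⟨⟨x, hx⟩, ⟨trivial, fun z _ => horth z z.2⟩, rfl⟩

theorem finrank_bilinRadical_compl₁₂_subtype_top :
    finrank ℝ (bilinRadical (β.compl₁₂ H.subtype H.subtype) ⊤) = finrank ℝ (bilinRadical β H) := by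
  rw [← map_subtype_bilinRadical_compl₁₂_top β H, Submodule.finrank_map_subtype_eq]

end Restriction

/-- For a nonzero linear form `α` on a finite-dimensional real
vector space `V` and an alternating 2-form `β`, the codimension of
`Δ = {v ∈ ker α | β v w = 0 for all w ∈ ker α}` is odd.  (Hence the pointwise
class of a rank-1 Pfaffian system is always odd.) -/
theorem stmt3 (V : Type*) [AddCommGroup V] [Module ℝ V] [FiniteDimensional ℝ V]
    (α : V →ₗ[ℝ] ℝ) (hα : α ≠ 0)
    (β : V →ₗ[ℝ] V →ₗ[ℝ] ℝ) (halt : ∀ v, β v v = 0) :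
    Odd (finrank ℝ V - finrank ℝ (bilinRadical β (LinearMap.ker α))) := by
  set H := LinearMap.ker α
  set βH := β.compl₁₂ H.subtype H.subtype
  have hcodim : finrank ℝ H + 1 = finrank ℝ V := Module.Dual.finrank_ker_add_one_of_ne_zero hα
  have hrad : finrank ℝ (bilinRadical βH ⊤) = finrank ℝ (bilinRadical β H) :=
    finrank_bilinRadical_compl₁₂_subtype_top β H
  have hle : finrank ℝ (bilinRadical βH ⊤) ≤ finrank ℝ H := Submodule.finrank_le _
  obtain ⟨k, hk⟩ := LinearMap.IsAlt.even_finrank_sub_finrank_bilinRadical_top (β := βH)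
    fun x => halt x
  exact ⟨k, by omega⟩
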